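/- For positive integers n and q and non-negative integers i and k, the limit as z tends to -k of Γ^(i)(n z) / Γ^(i)(q z) equals (-1)^((n - q) * k) * (q / n)^(i+1) * (q k)! / (n k)!, where Γ^(i) denotes the i-th derivative of the Gamma function. -/

import Mathlib

/-!
Near `-m`, `Γ z = F z / (z + m)` with `F z = Γ (z + m + 1) / ∏_{j < m} (z + j)` analytic and
`F (-m) = (-1)^m / m!`. Writing `F z = F (-m) + (z + m) g z` with `g` analytic splits `Γ` into the
polar part `F (-m) / (z + m)`, whose `i`-th derivative is `(-1)^i i! F (-m) / (z + m)^(i+1)`, and an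
analytic remainder, so `(z + m)^(i+1) Γ^(i) z → (-1)^i i! (-1)^m / m!`. Evaluating this at `n z`
and `q z` for `z → -k`, the common factor `(z + k)^(i+1)` cancels in the ratio.
-/

open Filter Topology

section SimplePole

variable {𝕜 : Type*} [NontriviallyNormedField 𝕜] {F : 𝕜 → 𝕜} {a : 𝕜}

theorem AnalyticAt.dslope (hF : AnalyticAt 𝕜 F a) : AnalyticAt 𝕜 (dslope F a) a :=
  let ⟨_, hp⟩ := hF
  ⟨_, hp.has_fpower_series_dslope_fslope⟩

theorem iteratedDeriv_inv_sub (i : ℕ) (a z : 𝕜) :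
    iteratedDeriv i (fun w => (w - a)⁻¹) z = (-1) ^ i * i.factorial / (z - a) ^ (i + 1) := by
  rw [iteratedDeriv_comp_sub_const (f := Inv.inv)]
  dsimp only
  rw [iteratedDeriv_eq_iterate, iter_deriv_inv, div_eq_mul_inv,
    show (-1 - i : ℤ) = -((i + 1 : ℕ) : ℤ) by push_cast; ring, zpow_neg, zpow_natCast]

variable [CompleteSpace 𝕜]

theorem tendsto_sub_pow_mul_iteratedDeriv_of_eq_div_sub {f : 𝕜 → 𝕜} (hF : AnalyticAt 𝕜 F a)
    (hf : ∀ᶠ z in 𝓝[≠] a, f z = F z / (z - a)) (i : ℕ) :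
    Tendsto (fun z => (z - a) ^ (i + 1) * iteratedDeriv i f z) (𝓝[≠] a)
      (𝓝 ((-1) ^ i * i.factorial * F a)) := by
  set g := dslope F a
  have hsplit : ∀ᶠ z in 𝓝[≠] a, f z = F a * (z - a)⁻¹ + g z := by
    filter_upwards [hf, self_mem_nhdsWithin] with z hfz hz
    have hza : z - a ≠ 0 := sub_ne_zero.mpr hz
    rw [hfz, ← sub_add_cancel (F z) (F a), ← sub_smul_dslope F a z, smul_eq_mul]
    field_simp
    ring
  have hderiv : ∀ᶠ z in 𝓝[≠] a, iteratedDeriv i f z =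
      F a * ((-1) ^ i * i.factorial / (z - a) ^ (i + 1)) + iteratedDeriv i g z := by
    rw [← eventually_eventually_nhdsWithin] at hsplit
    filter_upwards [hsplit, self_mem_nhdsWithin,
      nhdsWithin_le_nhds hF.dslope.eventually_analyticAt] with z hz hza hgz
    rw [isOpen_compl_singleton.nhdsWithin_eq hza] at hz
    rw [Filter.EventuallyEq.iteratedDeriv_eq i hz, iteratedDeriv_fun_add,
      iteratedDeriv_const_mul_field, iteratedDeriv_inv_sub]
    · exact contDiffAt_const.mul ((contDiffAt_id.sub contDiffAt_const).inv (sub_ne_zero.mpr hza))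
    · exact hgz.contDiffAt.of_le le_top
  have hcont : ContinuousAt (iteratedDeriv i g) a := by
    rw [iteratedDeriv_eq_iterate]
    exact (hF.dslope.iterated_deriv i).continuousAt
  have hvanish : Tendsto (fun z => (z - a) ^ (i + 1) * iteratedDeriv i g z) (𝓝 a) (𝓝 0) := by
    have : ContinuousAt (fun z => (z - a) ^ (i + 1) * iteratedDeriv i g z) a := by fun_prop
    simpa using this.tendsto
  have hlim : Tendsto (fun z => (-1) ^ i * i.factorial * F a + (z - a) ^ (i + 1) *
      iteratedDeriv i g z) (𝓝[≠] a) (𝓝 ((-1) ^ i * i.factorial * F a)) := by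
    simpa using tendsto_const_nhds.add (hvanish.mono_left nhdsWithin_le_nhds)
  refine hlim.congr' ?_
  filter_upwards [hderiv, self_mem_nhdsWithin] with z hderivz hz
  have hza : z - a ≠ 0 := sub_ne_zero.mpr hz
  rw [hderivz]
  field_simp

end SimplePole

theorem ascPochhammer_eval_neg_natCast_self (R : Type*) [Ring R] (m : ℕ) :
    (ascPochhammer R m).eval (-m : R) = (-1) ^ m * m.factorial := by
  rw [ascPochhammer_eval_neg_eq_descPochhammer, descPochhammer_eval_eq_descFactorial,
    Nat.descFactorial_self]

namespace Complex

theorem analyticAt_Gamma {s : ℂ} (hs : ∀ m : ℕ, s ≠ -m) : AnalyticAt ℂ Gamma s := by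
  have h := (differentiable_one_div_Gamma.analyticAt s).inv (by simpa using Gamma_ne_zero hs)
  simpa only [Pi.inv_def, inv_inv] using h

theorem eventually_ne_neg_natCast (m : ℕ) : ∀ᶠ z in 𝓝[≠] (-(m : ℂ)), ∀ k : ℕ, z ≠ -(k : ℂ) := by
  filter_upwards [self_mem_nhdsWithin, mem_nhdsWithin_of_mem_nhds (Metric.ball_mem_nhds _ one_pos)]
    with z hzm hz k hzk
  subst hzk
  have hkm : |((m : ℤ) - k : ℤ)| < 1 := by
    rw [Metric.mem_ball, dist_eq, show -(k : ℂ) - -m = ((m - k : ℤ) : ℂ) by push_cast; ring,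
      norm_intCast] at hz
    exact_mod_cast hz
  rw [Int.abs_lt_one_iff, sub_eq_zero, Nat.cast_inj] at hkm
  exact hzm (by rw [hkm]; rfl)

theorem eventually_Gamma_eq_div (m : ℕ) : ∀ᶠ z in 𝓝[≠] (-(m : ℂ)),
    Gamma z = Gamma (z + (m + 1 : ℕ)) / (ascPochhammer ℂ m).eval z / (z - -m) := by
  filter_upwards [eventually_ne_neg_natCast m] with z hz
  have hP : (ascPochhammer ℂ (m + 1)).eval z ≠ 0 := by
    rw [Ne, ascPochhammer_eval_eq_zero_iff]
    rintro ⟨k, -, hk⟩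
    exact hz k (by rw [hk, neg_neg])
  rw [div_div, sub_neg_eq_add, ← ascPochhammer_succ_eval, eq_div_iff hP,
    ← Gamma_add_nat_div_Gamma_eq z hz, mul_div_cancel₀ _ (Gamma_ne_zero hz)]

theorem analyticAt_Gamma_add_div_ascPochhammer (m : ℕ) :
    AnalyticAt ℂ (fun z => Gamma (z + (m + 1 : ℕ)) / (ascPochhammer ℂ m).eval z) (-m) := by
  have hGamma : AnalyticAt ℂ Gamma 1 :=
    analyticAt_Gamma fun k => by
      rw [ne_eq, eq_neg_iff_add_eq_zero, add_comm]; exact_mod_cast k.succ_ne_zero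
  refine AnalyticAt.fun_div
    (hGamma.comp_of_eq (f := fun z => z + ((m + 1 : ℕ) : ℂ)) (by fun_prop) (by push_cast; ring))
    ((ascPochhammer ℂ m).differentiable.analyticAt _) ?_
  rw [ascPochhammer_eval_neg_natCast_self]
  exact mul_ne_zero (pow_ne_zero _ (by norm_num)) (by exact_mod_cast m.factorial_ne_zero)

theorem tendsto_add_pow_mul_iteratedDeriv_Gamma (i m : ℕ) :
    Tendsto (fun z => (z + m) ^ (i + 1) * iteratedDeriv i Gamma z) (𝓝[≠] (-(m : ℂ)))
      (𝓝 ((-1) ^ i * i.factorial / ((-1) ^ m * m.factorial))) := by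
  have h := tendsto_sub_pow_mul_iteratedDeriv_of_eq_div_sub
    (analyticAt_Gamma_add_div_ascPochhammer m) (eventually_Gamma_eq_div m) i
  have hres : Gamma (-(m : ℂ) + ((m + 1 : ℕ) : ℂ)) / (ascPochhammer ℂ m).eval (-(m : ℂ)) =
      ((-1 : ℂ) ^ m * m.factorial)⁻¹ := by
    rw [ascPochhammer_eval_neg_natCast_self,
      show -(m : ℂ) + ((m + 1 : ℕ) : ℂ) = 1 by push_cast; ring, Gamma_one, one_div]
  simpa only [sub_neg_eq_add, hres, div_eq_mul_inv] using h

theorem tendsto_add_pow_mul_iteratedDeriv_Gamma_natCast_mul (i k : ℕ) {p : ℕ} (hp : p ≠ 0) :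
    Tendsto (fun z => (z + k) ^ (i + 1) * iteratedDeriv i Gamma (p * z)) (𝓝[≠] (-(k : ℂ)))
      (𝓝 ((-1) ^ i * i.factorial / ((-1) ^ (p * k) * (p * k).factorial * p ^ (i + 1)))) := by
  have hp' : (p : ℂ) ≠ 0 := Nat.cast_ne_zero.mpr hp
  have hmap : Tendsto (fun z : ℂ => p * z) (𝓝[≠] (-(k : ℂ))) (𝓝[≠] (-((p * k : ℕ) : ℂ))) := by
    have h := ((Homeomorph.mulLeft₀ (p : ℂ) hp').map_punctured_nhds_eq (-(k : ℂ))).le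
    simp only [Homeomorph.coe_mulLeft₀] at h
    rwa [mul_neg, ← Nat.cast_mul] at h
  have h := ((tendsto_add_pow_mul_iteratedDeriv_Gamma i (p * k)).comp hmap).const_mul
    ((p : ℂ) ^ (i + 1))⁻¹
  convert h using 2 with z
  · rw [Function.comp_apply, Nat.cast_mul, ← mul_add, mul_pow, mul_assoc,
      inv_mul_cancel_left₀ (pow_ne_zero _ hp')]
  · field_simp

end Complex

theorem gamma_deriv_ratio_limit (n q : ℕ) (hn : 0 < n) (hq : 0 < q) (i k : ℕ) :
    Filter.Tendsto
      (fun z : ℂ =>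
        iteratedDeriv i Complex.Gamma (n * z) / iteratedDeriv i Complex.Gamma (q * z))
      (nhdsWithin (-(k : ℂ)) {(-(k : ℂ))}ᶜ)
      (nhds ((-1 : ℂ) ^ (((n : ℤ) - q) * k) * ((q : ℂ) / n) ^ (i + 1) *
        (Nat.factorial (q * k) : ℂ) / (Nat.factorial (n * k) : ℂ))) := by
  have hsign : (-1 : ℂ) ^ (((n : ℤ) - q) * k) = (-1) ^ (q * k) / (-1) ^ (n * k) := by
    rw [← inv_neg_one, inv_zpow', show -(((n : ℤ) - q) * k) = ((q * k : ℕ) : ℤ) - (n * k : ℕ) by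
      push_cast; ring, zpow_sub₀ (by norm_num), zpow_natCast, zpow_natCast, inv_neg_one]
  have hlim := (Complex.tendsto_add_pow_mul_iteratedDeriv_Gamma_natCast_mul i k hn.ne').div
    (Complex.tendsto_add_pow_mul_iteratedDeriv_Gamma_natCast_mul i k hq.ne')
    (by simp [Nat.factorial_ne_zero, hq.ne'])
  convert hlim.congr' ?_ using 2
  · rw [hsign, div_pow]
    field_simp [Nat.factorial_ne_zero]
  · filter_upwards [self_mem_nhdsWithin] with z hz
    exact mul_div_mul_left _ _ (pow_ne_zero _ (by rwa [Ne, add_eq_zero_iff_eq_neg]))
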